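/- arXiv:2203.15774 — 5 statements merged into one kernel-verified Lean document; each statement's English description precedes it below -/
import Mathlib

section
/- For every nonnegative integer k and positive integer n, the number of lattice points in the k-th dilate of the n-dimensional cross polytope ◇_n equals ∑_{j=0}^{n} binom(n, j) · binom(k − j + n, n). -/
/-!
Record a lattice point `x` by the set `S` of its negative coordinates and the vector `y ∈ ℕⁿ`
with `|x i| = y i + [i ∈ S]`; this is a bijection under which `∑ |x i| ≤ k` becomes
`∑ y i ≤ k - #S`. Adding a slack coordinate, stars and bars counts these `y` as
`binom(k + n - #S, n)`, and there are `binom(n, j)` sets `S` of size `j`.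
-/

open Finset

variable {ι : Type*} [Fintype ι]

def sumLeEquivSumEqOption (m : ℕ) :
    {y : ι → ℕ // ∑ i, y i ≤ m} ≃ {z : Option ι → ℕ // ∑ o, z o = m} where
  toFun y := ⟨fun o => o.elim (m - ∑ i, y.1 i) y.1, by
    have := y.2
    simp only [Fintype.sum_option, Option.elim_none, Option.elim_some]
    omega⟩
  invFun z := ⟨fun i => z.1 (some i), by
    have := z.2
    rw [Fintype.sum_option] at this
    beta_reduce
    omega⟩
  left_inv _ := rfl
  right_inv z := by
    have := z.2
    rw [Fintype.sum_option] at this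
    ext (_ | i)
    · show m - ∑ i, z.1 (some i) = z.1 none
      omega
    · rfl

theorem natCard_sum_le (m : ℕ) :
    Nat.card {y : ι → ℕ // ∑ i, y i ≤ m} = (m + Fintype.card ι).choose (Fintype.card ι) := by
  classical
  rw [Nat.card_congr ((sumLeEquivSumEqOption m).trans (Sym.equivNatSumOfFintype _ m).symm),
    Sym.natCard_sym_eq_choose, Finite.card_option, Nat.card_eq_fintype_card,
    ← Nat.choose_symm_add]
  congr 1
  omega

theorem natCard_sum_add_le {j : ℕ} (k : ℕ) (hj : j ≤ Fintype.card ι) :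
    Nat.card {y : ι → ℕ // ∑ i, y i + j ≤ k} =
      (k + Fintype.card ι - j).choose (Fintype.card ι) := by
  rcases le_or_gt j k with hjk | hkj
  · rw [Nat.card_congr (Equiv.subtypeEquivRight fun y => (le_tsub_iff_right hjk).symm),
      natCard_sum_le, tsub_add_eq_add_tsub hjk]
  · have : IsEmpty {y : ι → ℕ // ∑ i, y i + j ≤ k} :=
      ⟨fun y => (le_of_add_le_right y.2).not_gt hkj⟩
    rw [Nat.card_of_isEmpty, eq_comm, Nat.choose_eq_zero_iff]
    omega

instance finite_sum_add_le (j k : ℕ) : Finite {y : ι → ℕ // ∑ i, y i + j ≤ k} := by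
  classical
  exact Set.Finite.to_subtype <| (Set.finite_Iic fun _ => k).subset fun y hy i =>
    (single_le_sum (fun i _ => Nat.zero_le (y i)) (mem_univ i)).trans (le_of_add_le_left hy)

section SignDecomposition

variable [DecidableEq ι]

def signMagnitudeEquiv : (ι → ℤ) ≃ Finset ι × (ι → ℕ) where
  toFun x := (({i | x i < 0} : Finset ι),
    fun i => if x i < 0 then (-x i - 1).toNat else (x i).toNat)
  invFun p i := if i ∈ p.1 then -(p.2 i + 1 : ℤ) else p.2 i
  left_inv x := by
    ext i
    simp only [mem_filter, mem_univ, true_and]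
    split_ifs <;> omega
  right_inv p := by
    ext i
    · simp only [mem_filter, mem_univ, true_and]
      split_ifs with h <;> simp only [h, iff_true, iff_false, not_lt] <;> omega
    · simp only
      split_ifs <;> omega

theorem abs_apply_eq_signMagnitudeEquiv (x : ι → ℤ) (i : ι) :
    |x i| = (signMagnitudeEquiv x).2 i + if i ∈ (signMagnitudeEquiv x).1 then 1 else 0 := by
  simp only [signMagnitudeEquiv, Equiv.coe_fn_mk, mem_filter, mem_univ, true_and]
  split_ifs with h
  · rw [abs_of_neg h]; omega
  · rw [abs_of_nonneg (not_lt.1 h)]; omega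

theorem sum_abs_eq_signMagnitudeEquiv (x : ι → ℤ) :
    ∑ i, |x i| = ((∑ i, (signMagnitudeEquiv x).2 i + #(signMagnitudeEquiv x).1 : ℕ) : ℤ) := by
  rw [sum_congr rfl fun i _ => abs_apply_eq_signMagnitudeEquiv x i, sum_add_distrib, sum_boole,
    filter_mem_eq_inter, univ_inter]
  norm_cast

def sumAbsLeEquiv (k : ℕ) :
    {x : ι → ℤ // ∑ i, |x i| ≤ k} ≃ Σ S : Finset ι, {y : ι → ℕ // ∑ i, y i + #S ≤ k} :=
  (signMagnitudeEquiv.subtypeEquiv (q := fun p => ∑ i, p.2 i + #p.1 ≤ k) fun x => by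
      rw [sum_abs_eq_signMagnitudeEquiv, Nat.cast_le]).trans
    (Equiv.subtypeProdEquivSigmaSubtype fun (S : Finset ι) (y : ι → ℕ) => ∑ i, y i + #S ≤ k)

theorem natCard_sum_abs_le (k : ℕ) :
    Nat.card {x : ι → ℤ // ∑ i, |x i| ≤ k} =
      ∑ j ∈ range (Fintype.card ι + 1),
        (Fintype.card ι).choose j * (k + Fintype.card ι - j).choose (Fintype.card ι) := by
  rw [Nat.card_congr (sumAbsLeEquiv k), Nat.card_sigma,
    sum_congr rfl fun S _ => natCard_sum_add_le k (card_le_univ S), ← powerset_univ,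
    sum_powerset_apply_card (fun j => (k + Fintype.card ι - j).choose _), card_univ]
  simp only [smul_eq_mul]

end SignDecomposition

theorem crossPolytope_latticePoint_count_general (n k : ℕ) :
    {x : Fin n → ℤ | ∑ i, |x i| ≤ (k : ℤ)}.ncard
      = ∑ j ∈ Finset.range (n + 1), Nat.choose n j * Nat.choose (k + n - j) n := by
  rw [← Nat.card_coe_set_eq]
  have := natCard_sum_abs_le (ι := Fin n) k
  rwa [Fintype.card_fin] at this

/-- The number of lattice points in the `k`-th dilate of the `n`-dimensional cross
polytope `◇_n = {x : |x_1| + … + |x_n| ≤ 1}` equals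
`∑_{j=0}^{n} binom(n,j) · binom(k-j+n, n)`. -/
theorem crossPolytope_latticePoint_count (n k : ℕ) (hn : 0 < n) :
    {x : Fin n → ℤ | ∑ i, |x i| ≤ (k : ℤ)}.ncard
      = ∑ j ∈ Finset.range (n + 1), Nat.choose n j * Nat.choose (k + n - j) n :=
  crossPolytope_latticePoint_count_general n k
end

section
/- As formal power series in t over ℚ, ∑_{k ≥ 0} (2k + 1)^n t^k = d_{B_n}(t) / (1 − t)^{n+1}, where d_{B_n}(t) = ∑_{w ∈ B_n} t^{des(w)} is the descent polynomial of the hyperoctahedral group. Equivalently, (1 − t)^{n+1} · ∑_{k ≥ 0} (2k+1)^n t^k is a polynomial whose coefficients are the type-B Eulerian numbers. -/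
/-!
Sorting the coordinates of a point `f ∈ {-k, …, k}ⁿ` by absolute value, with ties broken by the
signed letter `±(i + 1)` carrying the sign of `f i`, yields a signed permutation `w` and the sorted
absolute values `0 ≤ c₁ ≤ ⋯ ≤ cₙ ≤ k`. With `c₀ = w₀ = 0` the pairs `(cᵢ, wᵢ)` then increase
lexicographically, i.e. `c` increases strictly across every descent of `w`; conversely every such
pair `(w, c)` comes from exactly one point. Replacing `cᵢ` by `cᵢ + i - 1 - #{descents before i}`
turns these sequences into the strictly increasing maps `Fin n → {0, …, n + k - des w - 1}`, so
`(2k + 1)ⁿ = ∑_w C(n + k - des w, n)`, the coefficient of `t^k` in `∑_w t^{des w} / (1 - t)^{n+1}`.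
-/

/-- The group `B_n` of signed permutations of `[n]`, modelled as a pair of a permutation
of `Fin n` and a sign vector (`true` meaning a negative sign). -/
abbrev SignedPerm (n : ℕ) := Equiv.Perm (Fin n) × (Fin n → Bool)

/-- The one-line word of a signed permutation, as a function `ℕ → ℤ`, 1-indexed,
with the convention `w_0 = 0` (and junk value `0` beyond position `n`). -/
def signedVal {n : ℕ} (w : SignedPerm n) : ℕ → ℤ := fun i =>
  if h : i - 1 < n ∧ 1 ≤ i then
    (if w.2 ⟨i - 1, h.1⟩ then -(((w.1 ⟨i - 1, h.1⟩ : Fin n) : ℤ) + 1)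
     else ((w.1 ⟨i - 1, h.1⟩ : Fin n) : ℤ) + 1)
  else 0

def signedDesSet {n : ℕ} (w : SignedPerm n) : Finset ℕ :=
  (Finset.range n).filter (fun i => signedVal w (i + 1) < signedVal w i)

open Finset Function

variable {n : ℕ}

open PowerSeries in
theorem PowerSeries.X_pow_mul_inv_one_sub_pow {K : Type*} [Field K] {d n : ℕ} (hd : d ≤ n) :
    (X : K⟦X⟧) ^ d * ((1 - X) ^ (n + 1))⁻¹ = mk fun k => ((n + k - d).choose n : K) := by
  have hinv : ((1 - X : K⟦X⟧) ^ (n + 1))⁻¹ = mk fun m => ((n + m).choose n : K) := by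
    rw [PowerSeries.inv_eq_iff_mul_eq_one (by simp)]
    exact mk_add_choose_mul_one_sub_pow_eq_one K n
  ext k
  rw [hinv, coeff_X_pow_mul', coeff_mk]
  split_ifs with hk
  · rw [coeff_mk, Nat.add_sub_assoc hk]
  · rw [coeff_mk, Nat.choose_eq_zero_of_lt (by omega), Nat.cast_zero]

lemma Tuple.eq_sort_of_strictMono {α : Type*} [LinearOrder α] {f : Fin n → α}
    {σ : Equiv.Perm (Fin n)} (h : StrictMono (f ∘ σ)) : σ = Tuple.sort f :=
  Tuple.eq_sort_iff.2 ⟨h.monotone, fun _ _ hij he => absurd he (h hij).ne⟩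

lemma Tuple.strictMono_comp_sort {α : Type*} [LinearOrder α] {f : Fin n → α}
    (hf : Injective f) : StrictMono (f ∘ Tuple.sort f) :=
  (Tuple.monotone_sort f).strictMono_of_injective (hf.comp (Tuple.sort f).injective)

lemma monotone_sub_val_of_strictMono {g : Fin n → ℕ} (hg : StrictMono g) :
    Monotone fun j => (g j : ℤ) - j := by
  cases n with
  | zero => exact fun a => a.elim0
  | succ n =>
    refine Fin.monotone_iff_le_succ.2 fun i => ?_
    have := hg (Fin.castSucc_lt_succ (i := i))
    simp only [Fin.val_succ, Fin.val_castSucc]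
    push_cast
    omega

lemma val_le_apply_and_apply_add_le_of_strictMono {g : Fin n → ℕ} {m : ℕ} (hg : StrictMono g)
    (hm : ∀ j, g j < m) (j : Fin n) : j ≤ g j ∧ g j + n ≤ m + j := by
  have hmono := monotone_sub_val_of_strictMono hg
  have := j.isLt
  have h0 := hmono (show (⟨0, by omega⟩ : Fin n) ≤ j from Fin.mk_le_mk.2 (Nat.zero_le _))
  have h1 := hmono (show j ≤ ⟨n - 1, by omega⟩ from Fin.le_def.2 (show (j : ℕ) ≤ n - 1 by omega))
  have := hm ⟨n - 1, by omega⟩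
  dsimp only at h0 h1
  omega

def strictMonoSeqs (n m : ℕ) : Finset (Fin n → ℕ) :=
  (Fintype.piFinset fun _ => range m).filter StrictMono

lemma mem_strictMonoSeqs {m : ℕ} {g : Fin n → ℕ} :
    g ∈ strictMonoSeqs n m ↔ (∀ j, g j < m) ∧ StrictMono g := by
  simp [strictMonoSeqs]

theorem card_strictMonoSeqs (n m : ℕ) : #(strictMonoSeqs n m) = m.choose n := by
  calc _ = #(powersetCard n (range m)) := by
        refine card_bij' (fun g _ => univ.image g)
          (fun s hs => s.orderEmbOfFin (mem_powersetCard.1 hs).2) ?_ ?_ ?_ ?_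
        · intro g hg
          rw [mem_strictMonoSeqs] at hg
          rw [mem_powersetCard, card_image_of_injective _ hg.2.injective, card_univ,
            Fintype.card_fin]
          exact ⟨fun x hx => by obtain ⟨j, -, rfl⟩ := mem_image.1 hx; exact mem_range.2 (hg.1 j),
            rfl⟩
        · intro s hs
          exact mem_strictMonoSeqs.2 ⟨fun j => mem_range.1 <|
            (mem_powersetCard.1 hs).1 (s.orderEmbOfFin_mem _ j), (s.orderEmbOfFin _).strictMono⟩
        · intro g hg
          exact (orderEmbOfFin_unique _ (fun j => mem_image_of_mem g (mem_univ j))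
            (mem_strictMonoSeqs.1 hg).2).symm
        · intro s _
          rw [← coe_inj, coe_image, coe_univ, Set.image_univ, range_orderEmbOfFin]
    _ = m.choose n := by simp

/-- `c` read as the sequence `0, c 0, …, c (n - 1)`, indexed like `signedVal`. -/
def consZero (c : Fin n → ℕ) : ℕ → ℕ
  | 0 => 0
  | i + 1 => if h : i < n then c ⟨i, h⟩ else 0

@[simp] lemma consZero_zero (c : Fin n → ℕ) : consZero c 0 = 0 := rfl

lemma consZero_succ (c : Fin n → ℕ) {i : ℕ} (hi : i < n) : consZero c (i + 1) = c ⟨i, hi⟩ := by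
  simp [consZero, hi]

def compatibleSeqs (D : Finset ℕ) (n k : ℕ) : Finset (Fin n → ℕ) :=
  (Fintype.piFinset fun _ => range (k + 1)).filter fun c =>
    ∀ i < n, consZero c i + (if i ∈ D then 1 else 0) ≤ consZero c (i + 1)

lemma card_inter_range_add_one (D : Finset ℕ) (i : ℕ) :
    #(D ∩ range (i + 1)) = #(D ∩ range i) + if i ∈ D then 1 else 0 := by
  rw [range_add_one]
  split_ifs with h
  · rw [inter_insert_of_mem h, card_insert_of_notMem (by simp)]
  · rw [inter_insert_of_notMem h, add_zero]

section compatibleSeqs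

variable {D : Finset ℕ} {k : ℕ}

lemma monotoneOn_consZero_sub_card {c : Fin n → ℕ} (hc : c ∈ compatibleSeqs D n k) :
    MonotoneOn (fun i => (consZero c i : ℤ) - #(D ∩ range i)) (Set.Iic n) := by
  refine monotoneOn_of_le_add_one Set.ordConnected_Iic fun i _ _ hi => ?_
  have := (mem_filter.1 hc).2 i (Nat.lt_of_succ_le (Set.mem_Iic.1 hi))
  rw [card_inter_range_add_one]
  split_ifs at * <;> push_cast <;> omega

lemma card_inter_range_le_of_mem_compatibleSeqs (hD : D ⊆ range n) {c : Fin n → ℕ}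
    (hc : c ∈ compatibleSeqs D n k) (j : Fin n) :
    #(D ∩ range (j + 1)) ≤ c j ∧ c j + #D ≤ k + #(D ∩ range (j + 1)) := by
  have hmono := monotoneOn_consZero_sub_card hc
  have h0 := hmono (a := 0) (b := j + 1) (Set.mem_Iic.2 (by omega)) (Set.mem_Iic.2 (by omega))
    (by omega)
  have h1 := hmono (a := j + 1) (b := n) (Set.mem_Iic.2 (by omega)) (Set.mem_Iic.2 le_rfl)
    (by omega)
  have hk := Fintype.mem_piFinset.1 (mem_filter.1 hc).1
  simp only [inter_eq_left.2 hD, consZero_succ c j.isLt, Fin.eta, Nat.cast_zero, consZero_zero,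
    range_zero, inter_empty, card_empty, sub_zero] at h0 h1
  cases n with
  | zero => exact j.elim0
  | succ m =>
    rw [consZero_succ c (Nat.lt_succ_self m)] at h1
    have := mem_range.1 (hk (Fin.last m))
    simp only [Fin.last] at this
    omega

lemma shift_mem_strictMonoSeqs (hD : D ⊆ range n) {c : Fin n → ℕ}
    (hc : c ∈ compatibleSeqs D n k) :
    (fun j => c j + j - #(D ∩ range (j + 1))) ∈ strictMonoSeqs n (n + k - #D) := by
  have hb := card_inter_range_le_of_mem_compatibleSeqs hD hc
  have hDn : #D ≤ n := by simpa using card_le_card hD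
  refine mem_strictMonoSeqs.2 ⟨fun j => ?_, fun a b hab => ?_⟩
  · have := hb j
    omega
  · have hab' : (a : ℕ) < b := hab
    have hmono := monotoneOn_consZero_sub_card hc (a := a + 1) (b := b + 1)
      (Set.mem_Iic.2 (by omega)) (Set.mem_Iic.2 (by omega)) (by omega)
    have := hb a
    have := hb b
    simp only [consZero_succ c a.isLt, consZero_succ c b.isLt, Fin.eta] at hmono
    dsimp only
    omega

lemma unshift_mem_compatibleSeqs {g : Fin n → ℕ} (hg : g ∈ strictMonoSeqs n (n + k - #D)) :
    (fun j => g j - j + #(D ∩ range (j + 1))) ∈ compatibleSeqs D n k := by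
  obtain ⟨hm, hg⟩ := mem_strictMonoSeqs.1 hg
  have hb := val_le_apply_and_apply_add_le_of_strictMono hg hm
  have hS (i : ℕ) : #(D ∩ range i) ≤ #D := card_le_card inter_subset_left
  simp only [compatibleSeqs, mem_filter, Fintype.mem_piFinset, mem_range]
  refine ⟨fun j => ?_, fun i hi => ?_⟩
  · have := hb j
    have := hS (j + 1)
    omega
  · have hstep := card_inter_range_add_one D i
    rcases i with _ | i
    · rw [consZero_zero, consZero_succ _ hi]
      have := hb ⟨0, hi⟩
      simp only [range_zero, inter_empty, card_empty, zero_add] at hstep ⊢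
      split_ifs at * <;> omega
    · rw [consZero_succ _ (by omega), consZero_succ _ hi]
      have := hb ⟨i, by omega⟩
      have := hb ⟨i + 1, hi⟩
      have := monotone_sub_val_of_strictMono hg
        (show (⟨i, by omega⟩ : Fin n) ≤ ⟨i + 1, hi⟩ from Fin.mk_le_mk.2 (by omega))
      dsimp only [Fin.val_mk] at *
      split_ifs at * <;> omega

theorem card_compatibleSeqs (hD : D ⊆ range n) (k : ℕ) :
    #(compatibleSeqs D n k) = (n + k - #D).choose n := by
  rw [← card_strictMonoSeqs]
  refine card_bij' (fun c _ j => c j + j - #(D ∩ range (j + 1)))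
    (fun g _ j => g j - j + #(D ∩ range (j + 1))) (fun c hc => shift_mem_strictMonoSeqs hD hc)
    (fun g hg => unshift_mem_compatibleSeqs hg) (fun c hc => funext fun j => ?_)
    (fun g hg => funext fun j => ?_)
  · have := (card_inter_range_le_of_mem_compatibleSeqs hD hc j).1
    dsimp only
    omega
  · obtain ⟨hm, hg⟩ := mem_strictMonoSeqs.1 hg
    have := (val_le_apply_and_apply_add_le_of_strictMono hg hm j).1
    dsimp only
    omega

end compatibleSeqs

namespace SignedPerm

def letter (w : SignedPerm n) (j : Fin n) : ℤ :=
  if w.2 j then -(((w.1 j : ℕ) : ℤ) + 1) else ((w.1 j : ℕ) : ℤ) + 1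

@[simp] lemma signedVal_zero (w : SignedPerm n) : signedVal w 0 = 0 := by
  simp [signedVal]

lemma signedVal_succ (w : SignedPerm n) {i : ℕ} (hi : i < n) :
    signedVal w (i + 1) = w.letter ⟨i, hi⟩ := by
  simp [signedVal, letter, hi]

lemma natAbs_letter (w : SignedPerm n) (j : Fin n) : (w.letter j).natAbs = w.1 j + 1 := by
  unfold letter
  split <;> omega

lemma letter_injective : Injective (letter : SignedPerm n → Fin n → ℤ) := by
  intro w w' h
  have hσ : w.1 = w'.1 := Equiv.ext fun j => Fin.ext <| by
    have := congrArg Int.natAbs (congrFun h j)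
    rw [natAbs_letter, natAbs_letter] at this
    omega
  refine Prod.ext hσ (funext fun j => ?_)
  have := congrFun h j
  simp only [letter, hσ] at this
  split_ifs at this <;> simp_all <;> omega

lemma signedVal_ne_signedVal_succ (w : SignedPerm n) {i : ℕ} (hi : i < n) :
    signedVal w i ≠ signedVal w (i + 1) := by
  intro h
  have h' := congrArg Int.natAbs h
  rw [signedVal_succ w hi, natAbs_letter] at h'
  rcases i with _ | i
  · simp at h'
  · rw [signedVal_succ w (by omega), natAbs_letter] at h'
    have := w.1.injective (Fin.ext (Nat.succ_injective h'))
    simp [Fin.ext_iff] at this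

lemma mem_signedDesSet (w : SignedPerm n) (i : ℕ) :
    i ∈ signedDesSet w ↔ i < n ∧ signedVal w (i + 1) < signedVal w i := by
  simp [signedDesSet]

lemma signedDesSet_subset_range (w : SignedPerm n) : signedDesSet w ⊆ range n :=
  filter_subset _ _

lemma card_signedDesSet_le (w : SignedPerm n) : #(signedDesSet w) ≤ n := by
  simpa using card_le_card w.signedDesSet_subset_range

/-- A tie `cᵢ = cᵢ₊₁` is allowed exactly at an ascent `wᵢ < wᵢ₊₁`. -/
lemma mem_compatibleSeqs_signedDesSet {w : SignedPerm n} {k : ℕ} {c : Fin n → ℕ} :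
    c ∈ compatibleSeqs (signedDesSet w) n k ↔ (∀ j, c j ≤ k) ∧
      StrictMono (Fin.cons (toLex (0, 0)) fun j => toLex (c j, w.letter j) :
        Fin (n + 1) → ℕ ×ₗ ℤ) := by
  have hcons : (Fin.cons (toLex (0, 0)) fun j => toLex (c j, w.letter j) :
      Fin (n + 1) → ℕ ×ₗ ℤ) = fun i : Fin (n + 1) => toLex (consZero c i, signedVal w i) := by
    funext i
    refine Fin.cases ?_ (fun j => ?_) i
    · simp
    · simp [consZero_succ c j.isLt, signedVal_succ w j.isLt]
  simp only [compatibleSeqs, mem_filter, Fintype.mem_piFinset, mem_range, Nat.lt_succ_iff,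
    hcons, Fin.strictMono_iff_lt_succ, Fin.val_castSucc, Fin.val_succ, Prod.Lex.toLex_lt_toLex,
    mem_signedDesSet]
  refine and_congr_right fun _ => ⟨fun h i => ?_, fun h i hi => ?_⟩
  · have := h i i.isLt
    have := signedVal_ne_signedVal_succ w i.isLt
    split_ifs at * <;> omega
  · have hi' := h ⟨i, hi⟩
    have := signedVal_ne_signedVal_succ w hi
    dsimp only [Fin.val_mk] at hi'
    split_ifs at * <;> omega

end SignedPerm

noncomputable def cubePoints (n k : ℕ) : Finset (Fin n → ℤ) :=
  Fintype.piFinset fun _ => Icc (-k : ℤ) k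

lemma card_cubePoints (n k : ℕ) : #(cubePoints n k) = (2 * k + 1) ^ n := by
  simp only [cubePoints, Fintype.card_piFinset, Int.card_Icc, prod_const, card_univ,
    Fintype.card_fin]
  congr 1
  omega

def sortKey (f : Fin n → ℤ) (i : Fin n) : ℕ ×ₗ ℤ :=
  toLex ((f i).natAbs, if f i < 0 then -(((i : ℕ) : ℤ) + 1) else ((i : ℕ) : ℤ) + 1)

lemma sortKey_injective (f : Fin n → ℤ) : Injective (sortKey f) := by
  intro i j h
  have h2 := congrArg (fun p => (ofLex p).2) h
  simp only [sortKey, ofLex_toLex] at h2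
  apply Fin.ext
  split_ifs at h2 <;> omega

lemma toLex_zero_lt_sortKey (f : Fin n → ℤ) (i : Fin n) : toLex (0, 0) < sortKey f i := by
  simp only [sortKey, Prod.Lex.toLex_lt_toLex]
  split_ifs <;> omega

namespace SignedPerm

def toPoint (w : SignedPerm n) (c : Fin n → ℕ) : Fin n → ℤ := fun i =>
  if w.2 (w.1.symm i) then -(c (w.1.symm i) : ℤ) else c (w.1.symm i)

def ofPoint (f : Fin n → ℤ) : Σ _ : SignedPerm n, Fin n → ℕ :=
  let σ := Tuple.sort (sortKey f)
  ⟨(σ, fun j => decide (f (σ j) < 0)), fun j => (f (σ j)).natAbs⟩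

lemma toPoint_apply (w : SignedPerm n) (c : Fin n → ℕ) (j : Fin n) :
    w.toPoint c (w.1 j) = if w.2 j then -(c j : ℤ) else c j := by
  simp [toPoint]

lemma sortKey_toPoint {w : SignedPerm n} {c : Fin n → ℕ} {j : Fin n}
    (hj : toLex (0, 0) < toLex (c j, w.letter j)) :
    sortKey (w.toPoint c) (w.1 j) = toLex (c j, w.letter j) := by
  simp only [Prod.Lex.toLex_lt_toLex, letter] at hj
  simp only [sortKey, toPoint_apply, letter]
  split_ifs at * <;> simp_all <;> omega

lemma toLex_ofPoint (f : Fin n → ℤ) (j : Fin n) :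
    toLex ((ofPoint f).2 j, (ofPoint f).1.letter j) = sortKey f (Tuple.sort (sortKey f) j) := by
  simp only [ofPoint, letter, sortKey, decide_eq_true_eq]

variable {k : ℕ}

lemma toPoint_mem_cubePoints {w : SignedPerm n} {c : Fin n → ℕ}
    (hc : c ∈ compatibleSeqs (signedDesSet w) n k) : w.toPoint c ∈ cubePoints n k := by
  have hk := (mem_compatibleSeqs_signedDesSet.1 hc).1
  simp only [cubePoints, Fintype.mem_piFinset, mem_Icc, toPoint]
  intro i
  have := hk (w.1.symm i)
  split_ifs <;> omega

lemma ofPoint_mem_compatibleSeqs {f : Fin n → ℤ} (hf : f ∈ cubePoints n k) :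
    (ofPoint f).2 ∈ compatibleSeqs (signedDesSet (ofPoint f).1) n k := by
  simp only [cubePoints, Fintype.mem_piFinset, mem_Icc] at hf
  refine mem_compatibleSeqs_signedDesSet.2 ⟨fun j => ?_, ?_⟩
  · have := hf (Tuple.sort (sortKey f) j)
    simp only [ofPoint]
    omega
  · rw [Fin.strictMono_cons]
    simp only [toLex_ofPoint]
    exact ⟨fun j => toLex_zero_lt_sortKey f _, Tuple.strictMono_comp_sort (sortKey_injective f)⟩

lemma ofPoint_toPoint {w : SignedPerm n} {c : Fin n → ℕ}
    (hc : c ∈ compatibleSeqs (signedDesSet w) n k) : ofPoint (w.toPoint c) = ⟨w, c⟩ := by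
  obtain ⟨hpos, hstrict⟩ := Fin.strictMono_cons.1 (mem_compatibleSeqs_signedDesSet.1 hc).2
  have hkey : sortKey (w.toPoint c) ∘ w.1 = fun j => toLex (c j, w.letter j) :=
    funext fun j => sortKey_toPoint (hpos j)
  have hσ := Tuple.eq_sort_of_strictMono (hkey ▸ hstrict)
  have h j : toLex ((ofPoint (w.toPoint c)).2 j, (ofPoint (w.toPoint c)).1.letter j) =
      toLex (c j, w.letter j) := by
    rw [toLex_ofPoint, ← hσ]
    exact congrFun hkey j
  simp only [toLex_inj, Prod.mk.injEq] at h
  exact Sigma.ext (letter_injective (funext fun j => (h j).2)) (heq_of_eq (funext fun j => (h j).1))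

lemma toPoint_ofPoint (f : Fin n → ℤ) : (ofPoint f).1.toPoint (ofPoint f).2 = f := by
  funext i
  simp only [ofPoint, toPoint, Equiv.apply_symm_apply, decide_eq_true_eq]
  split_ifs <;> omega

theorem sum_card_compatibleSeqs_signedDesSet (n k : ℕ) :
    ∑ w : SignedPerm n, #(compatibleSeqs (signedDesSet w) n k) = (2 * k + 1) ^ n := by
  rw [← card_sigma, ← card_cubePoints]
  exact card_bij' (fun x _ => x.1.toPoint x.2) (fun f _ => ofPoint f)
    (fun x hx => toPoint_mem_cubePoints (mem_sigma.1 hx).2)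
    (fun f hf => mem_sigma.2 ⟨mem_univ _, ofPoint_mem_compatibleSeqs hf⟩)
    (fun x hx => ofPoint_toPoint (mem_sigma.1 hx).2) (fun f _ => toPoint_ofPoint f)

theorem sum_choose_sub_card_signedDesSet (n k : ℕ) :
    ∑ w : SignedPerm n, (n + k - #(signedDesSet w)).choose n = (2 * k + 1) ^ n := by
  rw [← sum_card_compatibleSeqs_signedDesSet]
  exact sum_congr rfl fun w _ => (card_compatibleSeqs w.signedDesSet_subset_range k).symm

end SignedPerm

theorem typeB_eulerian_hstar_cube_general (n : ℕ) :
    PowerSeries.mk (fun k => (((2 * k + 1 : ℕ) ^ n : ℕ) : ℚ))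
      = (∑ w : SignedPerm n, (PowerSeries.X : PowerSeries ℚ) ^ (signedDesSet w).card)
        * ((1 - PowerSeries.X) ^ (n + 1))⁻¹ := by
  rw [sum_mul, sum_congr rfl fun w _ =>
    PowerSeries.X_pow_mul_inv_one_sub_pow w.card_signedDesSet_le]
  ext k
  simp [map_sum, ← SignedPerm.sum_choose_sub_card_signedDesSet]

/-- MacMahon's type-B formula at `q = 1` for the cube `[-1,1]^n`: as formal power
series over `ℚ`, `∑_{k≥0} (2k+1)^n t^k = d_{B_n}(t)/(1-t)^{n+1}`, where
`d_{B_n}(t) = ∑_{w ∈ B_n} t^{des(w)}`. -/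
theorem typeB_eulerian_hstar_cube (n : ℕ) (hn : 0 < n) :
    PowerSeries.mk (fun k => (((2 * k + 1 : ℕ) ^ n : ℕ) : ℚ))
      = (∑ w : SignedPerm n, (PowerSeries.X : PowerSeries ℚ) ^ (signedDesSet w).card)
        * ((1 - PowerSeries.X) ^ (n + 1))⁻¹ :=
  typeB_eulerian_hstar_cube_general n
end

section
/- The Ehrhart polynomial of the two-dimensional distorted cross polytope C_2^c = conv{e_1, e_2, −(c−1)e_1, −(c−1)e_2} is L(k) = (c²/2)k² + ((c+2)/2)k + 1; that is, for every nonnegative integer k, the number of lattice points in the k-th dilate of C_2^c equals (c²k² + (c+2)k + 2)/2. -/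
open Pointwise

/-- The distorted cross polytope `C_2^c = conv{e_1, e_2, -(c-1)e_1, -(c-1)e_2} ⊂ ℝ²`. -/
noncomputable def distortedCross2 (c : ℕ) : Set (Fin 2 → ℝ) :=
  convexHull ℝ {Pi.single 0 (1 : ℝ), Pi.single 1 (1 : ℝ),
    Pi.single 0 (-((c : ℝ) - 1)), Pi.single 1 (-((c : ℝ) - 1))}

/-!
With `m = c - 1`, the dilate `k • C_2^c` is cut out by its four edge inequalities
`x + y ≤ k`, `-x + m y ≤ m k`, `-(x + y) ≤ m k` and `m x - y ≤ m k`. In each quadrant of `ℤ²`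
only one of them is active, and there the lattice points form a staircase
`{(i, j) ∈ ℕ² | i + a j < a n}` with `a n (n + 1) / 2` points: `(k + 1)(k + 2) / 2` in the first
quadrant, `m k (k + 1) / 2` in each of the second and fourth, and `m k (m k - 1) / 2` in the
third. These add up to `(c²k² + (c + 2)k + 2) / 2`.
-/

open Set

theorem smul_add_smul_add_smul_mem_convexHull {E : Type*} [AddCommGroup E] [Module ℝ E]
    {s : Set E} {u v w : E} (hu : u ∈ s) (hv : v ∈ s) (hw : w ∈ s) {a b c : ℝ}
    (ha : 0 ≤ a) (hb : 0 ≤ b) (hc : 0 ≤ c) (habc : a + b + c = 1) :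
    a • u + b • v + c • w ∈ convexHull ℝ s := by
  have hs := subset_convexHull ℝ s
  simpa [Fin.sum_univ_three] using (convex_convexHull ℝ s).sum_mem (t := Finset.univ)
    (w := ![a, b, c]) (z := ![u, v, w]) (by simp [Fin.forall_fin_succ, *])
    (by simp [Fin.sum_univ_three, habc]) (by simp [Fin.forall_fin_succ, hs hu, hs hv, hs hw])

theorem convexHull_distortedCross_eq {m : ℝ} (hm : 0 ≤ m) :
    convexHull ℝ {Pi.single 0 1, Pi.single 1 1, Pi.single 0 (-m), Pi.single 1 (-m)} =
      {x : Fin 2 → ℝ | x 0 + x 1 ≤ 1 ∧ -x 0 + m * x 1 ≤ m ∧ -(x 0 + x 1) ≤ m ∧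
        m * x 0 - x 1 ≤ m} := by
  apply Subset.antisymm
  · refine convexHull_min ?_ ?_
    · rintro _ (rfl | rfl | rfl | rfl) <;> simp <;> constructor <;> nlinarith
    · rintro x ⟨h₁, h₂, h₃, h₄⟩ y ⟨g₁, g₂, g₃, g₄⟩ a b ha hb hab
      simp only [mem_ofPred_eq, Pi.add_apply, Pi.smul_apply, smul_eq_mul]
      refine ⟨?_, ?_, ?_, ?_⟩ <;> nlinarith
  · rintro x ⟨h₁, h₂, h₃, h₄⟩
    have hm₁ : 0 < 1 + m := by linarith
    -- triangulate along `x 1 = 0`: triangles `e₁ e₂ (-m e₁)` and `e₁ (-m e₂) (-m e₁)`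
    rcases le_or_gt 0 (x 1) with hx | hx
    · have hx_eq : x = ((x 0 + m * (1 - x 1)) / (1 + m)) • Pi.single 0 1 + x 1 • Pi.single 1 1
          + ((1 - x 0 - x 1) / (1 + m)) • Pi.single 0 (-m) := by
        ext i; fin_cases i <;> simp; field_simp; ring
      rw [hx_eq]
      exact smul_add_smul_add_smul_mem_convexHull (by simp) (by simp) (by simp)
        (div_nonneg (by linarith) hm₁.le) hx (div_nonneg (by linarith) hm₁.le)
        (by field_simp; ring)
    · have hm : 0 < m := by
        by_contra! h
        nlinarith
      have hx_eq : x = ((x 0 + x 1 + m) / (1 + m)) • Pi.single 0 1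
          + (-x 1 / m) • Pi.single 1 (-m)
          + ((m + x 1 - m * x 0) / (m * (1 + m))) • Pi.single 0 (-m) := by
        ext i; fin_cases i <;> simp <;> field_simp; ring
      rw [hx_eq]
      exact smul_add_smul_add_smul_mem_convexHull (by simp) (by simp) (by simp)
        (div_nonneg (by linarith) hm₁.le) (div_nonneg (by linarith) hm.le)
        (div_nonneg (by linarith) (by positivity)) (by field_simp; ring)

theorem mem_smul_convexHull_distortedCross_iff {m r : ℝ} (hm : 0 ≤ m) (hr : 0 ≤ r)
    (x : Fin 2 → ℝ) :
    x ∈ r • convexHull ℝ {Pi.single 0 1, Pi.single 1 1, Pi.single 0 (-m), Pi.single 1 (-m)} ↔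
      x 0 + x 1 ≤ r ∧ -x 0 + m * x 1 ≤ m * r ∧ -(x 0 + x 1) ≤ m * r ∧
        m * x 0 - x 1 ≤ m * r := by
  rw [convexHull_distortedCross_eq hm]
  rcases hr.eq_or_lt with rfl | hr
  · rw [zero_smul_set ⟨Pi.single 0 1, by simp; constructor <;> linarith⟩, mem_zero]
    constructor
    · rintro rfl
      simp
    · rintro ⟨h₁, h₂, h₃, h₄⟩
      ext i; fin_cases i <;> simp <;> nlinarith
  · rw [mem_smul_set_iff_inv_smul_mem₀ hr.ne']
    obtain ⟨y, rfl⟩ : ∃ y, x = r • y := ⟨r⁻¹ • x, (smul_inv_smul₀ hr.ne' x).symm⟩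
    simp only [inv_smul_smul₀ hr.ne', mem_ofPred_eq, Pi.smul_apply, smul_eq_mul]
    constructor <;> rintro ⟨h₁, h₂, h₃, h₄⟩ <;> refine ⟨?_, ?_, ?_, ?_⟩ <;> nlinarith

theorem Set.ncard_eq_ncard_preimage_add_ncard_preimage {α β γ : Type*} {f : α → γ}
    {g : β → γ} (hf : f.Injective) (hg : g.Injective) (h : IsCompl (range f) (range g))
    {s : Set γ} (hs : s.Finite) : s.ncard = (f ⁻¹' s).ncard + (g ⁻¹' s).ncard := by
  rw [← ncard_inter_add_ncard_sdiff_eq_ncard s (range f) hs, sdiff_eq, h.compl_eq,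
    ← ncard_preimage_of_injective_subset_range hf inter_subset_right,
    ← ncard_preimage_of_injective_subset_range hg inter_subset_right,
    preimage_inter_range, preimage_inter_range]

theorem Int.isCompl_range_natCast_range_negSucc :
    IsCompl (Set.range ((↑) : ℕ → ℤ)) (Set.range Int.negSucc) := by
  constructor
  · rw [disjoint_iff_inf_le]
    rintro _ ⟨⟨i, rfl⟩, ⟨j, ⟨⟩⟩⟩
  · rw [codisjoint_iff_le_sup]
    rintro (i | j) <;> simp

theorem Int.ncard_eq_sum_quadrants {s : Set (ℤ × ℤ)} (hs : s.Finite) :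
    s.ncard = {p : ℕ × ℕ | ((p.1 : ℤ), (p.2 : ℤ)) ∈ s}.ncard
      + {p : ℕ × ℕ | ((p.1 : ℤ), Int.negSucc p.2) ∈ s}.ncard
      + ({p : ℕ × ℕ | (Int.negSucc p.1, (p.2 : ℤ)) ∈ s}.ncard
      + {p : ℕ × ℕ | (Int.negSucc p.1, Int.negSucc p.2) ∈ s}.ncard) := by
  have h := Int.isCompl_range_natCast_range_negSucc
  have hfst : IsCompl (Set.range (Prod.map ((↑) : ℕ → ℤ) (id : ℤ → ℤ)))
      (Set.range (Prod.map Int.negSucc (id : ℤ → ℤ))) := by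
    simpa [range_prodMap, prod_univ] using h.preimage Prod.fst
  have hsnd : IsCompl (Set.range (Prod.map (id : ℕ → ℕ) ((↑) : ℕ → ℤ)))
      (Set.range (Prod.map (id : ℕ → ℕ) Int.negSucc)) := by
    simpa [range_prodMap, univ_prod] using h.preimage Prod.snd
  have hinj₁ : Function.Injective ((↑) : ℕ → ℤ) := Nat.cast_injective
  have hinj₂ : Function.Injective Int.negSucc := @Int.negSucc.inj
  have hcast := hinj₁.prodMap (Function.injective_id (α := ℤ))
  have hneg := hinj₂.prodMap (Function.injective_id (α := ℤ))
  rw [ncard_eq_ncard_preimage_add_ncard_preimage hcast hneg hfst hs,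
    ncard_eq_ncard_preimage_add_ncard_preimage (Function.injective_id.prodMap hinj₁)
      (Function.injective_id.prodMap hinj₂) hsnd (hs.preimage hcast.injOn),
    ncard_eq_ncard_preimage_add_ncard_preimage (Function.injective_id.prodMap hinj₁)
      (Function.injective_id.prodMap hinj₂) hsnd (hs.preimage hneg.injOn)]
  rfl

theorem Nat.ncard_setOf_snd_lt_and_fst_lt (n : ℕ) (len : ℕ → ℕ) :
    {p : ℕ × ℕ | p.2 < n ∧ p.1 < len p.2}.ncard = ∑ j ∈ Finset.range n, len j := by
  have hfib : {p : ℕ × ℕ | p.2 < n ∧ p.1 < len p.2} =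
      ↑((Finset.range n).biUnion fun j => Finset.range (len j) ×ˢ {j}) := by
    ext ⟨i, j⟩
    simp [and_comm]
  rw [hfib, ncard_coe_finset, Finset.card_biUnion]
  · simp
  · intro j _ j' _ hj
    simp only [Finset.disjoint_left, Finset.mem_product, Finset.mem_singleton]
    rintro ⟨i, j₀⟩ ⟨-, rfl⟩ ⟨-, rfl⟩
    exact hj rfl

theorem Nat.two_mul_sum_range_sub (n : ℕ) :
    2 * ∑ j ∈ Finset.range n, (n - j) = n * (n + 1) := by
  induction n with
  | zero => rfl
  | succ n ih =>
    rw [Finset.sum_range_succ', mul_add, Finset.sum_congr rfl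
      (fun j _ => Nat.add_sub_add_right n 1 j), ih, Nat.sub_zero]
    ring

theorem Nat.two_mul_ncard_staircase (a n : ℕ) :
    2 * {p : ℕ × ℕ | p.1 + a * p.2 < a * n}.ncard = a * n * (n + 1) := by
  have hset : {p : ℕ × ℕ | p.1 + a * p.2 < a * n} = {p | p.2 < n ∧ p.1 < a * (n - p.2)} := by
    ext ⟨i, j⟩
    simp only [mem_ofPred_eq, Nat.mul_sub]
    constructor
    · intro h
      exact ⟨Nat.lt_of_mul_lt_mul_left (a := a) (by omega), by omega⟩
    · rintro ⟨hj, hi⟩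
      have := Nat.mul_le_mul_left a hj.le
      omega
  rw [hset, Nat.ncard_setOf_snd_lt_and_fst_lt n (fun j => a * (n - j)), ← Finset.mul_sum,
    mul_left_comm, Nat.two_mul_sum_range_sub, mul_assoc]

/-- The lattice points of `k • C_2^(m + 1)`, in the half-plane description of
`mem_smul_convexHull_distortedCross_iff`. -/
def crossLatticePoints (m k : ℕ) : Set (ℤ × ℤ) :=
  {q | q.1 + q.2 ≤ k ∧ -q.1 + m * q.2 ≤ m * k ∧ -(q.1 + q.2) ≤ m * k ∧ m * q.1 - q.2 ≤ m * k}

namespace crossLatticePoints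

variable {m k : ℕ}

theorem finite : (crossLatticePoints m k).Finite := by
  refine (finite_Icc (-(m * k : ℤ)) k |>.prod (finite_Icc (-(m * k : ℤ)) k)).subset ?_
  rintro ⟨x, y⟩ ⟨h₁, h₂, h₃, h₄⟩
  have hm : (0 : ℤ) ≤ m := by positivity
  simp only [mem_prod, mem_Icc]
  refine ⟨⟨?_, ?_⟩, ?_, ?_⟩ <;> nlinarith

theorem swap_mem {q : ℤ × ℤ} (hq : q ∈ crossLatticePoints m k) :
    q.swap ∈ crossLatticePoints m k := by
  obtain ⟨h₁, h₂, h₃, h₄⟩ := hq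
  refine ⟨?_, ?_, ?_, ?_⟩ <;> simp only [Prod.fst_swap, Prod.snd_swap] <;> linarith

theorem natCast_natCast_mem_iff (i j : ℕ) :
    ((i : ℤ), (j : ℤ)) ∈ crossLatticePoints m k ↔ i + j < k + 1 := by
  have hm : (0 : ℤ) ≤ m := by positivity
  simp only [crossLatticePoints, mem_ofPred_eq]
  constructor
  · rintro ⟨h₁, -⟩
    omega
  · intro h
    have : (i : ℤ) + j ≤ k := by omega
    refine ⟨this, ?_, ?_, ?_⟩ <;> nlinarith

theorem negSucc_natCast_mem_iff (i j : ℕ) :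
    (Int.negSucc i, (j : ℤ)) ∈ crossLatticePoints m k ↔ i + m * j < m * k := by
  have hm : (0 : ℤ) ≤ m := by positivity
  simp only [crossLatticePoints, mem_ofPred_eq, Int.negSucc_eq]
  constructor
  · rintro ⟨-, h₂, -⟩
    zify
    linarith
  · intro h
    zify at h
    refine ⟨?_, ?_, ?_, ?_⟩ <;> nlinarith

theorem negSucc_negSucc_mem_iff (i j : ℕ) :
    (Int.negSucc i, Int.negSucc j) ∈ crossLatticePoints m k ↔ i + j < m * k - 1 := by
  have hm : (0 : ℤ) ≤ m := by positivity
  simp only [crossLatticePoints, mem_ofPred_eq, Int.negSucc_eq]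
  constructor
  · rintro ⟨-, -, h₃, -⟩
    zify at h₃ ⊢
    omega
  · intro h
    have : (i : ℤ) + j + 2 ≤ m * k := by omega
    refine ⟨?_, ?_, ?_, ?_⟩ <;> nlinarith

end crossLatticePoints

open crossLatticePoints in
theorem ncard_crossLatticePoints (m k : ℕ) :
    ((crossLatticePoints m k).ncard : ℚ) = ((m + 1) ^ 2 * k ^ 2 + (m + 3) * k + 2) / 2 := by
  have hswap : {p : ℕ × ℕ | ((p.1 : ℤ), Int.negSucc p.2) ∈ crossLatticePoints m k} =
      Prod.swap ⁻¹' {p : ℕ × ℕ | (Int.negSucc p.1, (p.2 : ℤ)) ∈ crossLatticePoints m k} := by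
    ext p
    exact ⟨swap_mem, swap_mem⟩
  rw [Int.ncard_eq_sum_quadrants finite, hswap,
    ncard_preimage_of_injective_subset_range Prod.swap_injective
      (by simp [Prod.swap_surjective.range_eq])]
  simp only [natCast_natCast_mem_iff, negSucc_natCast_mem_iff, negSucc_negSucc_mem_iff]
  have hA := Nat.two_mul_ncard_staircase 1 (k + 1)
  have hB := Nat.two_mul_ncard_staircase m k
  have hD := Nat.two_mul_ncard_staircase 1 (m * k - 1)
  simp only [one_mul] at hA hD
  generalize {p : ℕ × ℕ | p.1 + p.2 < k + 1}.ncard = A at hA ⊢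
  generalize {p : ℕ × ℕ | p.1 + m * p.2 < m * k}.ncard = B at hB ⊢
  generalize {p : ℕ × ℕ | p.1 + p.2 < m * k - 1}.ncard = D at hD ⊢
  have hD' : (2 * D : ℚ) = m * k * (m * k - 1) := by
    rw [← Nat.cast_mul]
    generalize m * k = n at hD ⊢
    cases n with
    | zero => simp_all
    | succ n =>
      rw [Nat.add_sub_cancel] at hD
      qify at hD
      push_cast
      linear_combination hD
  qify at hA hB
  push_cast
  linear_combination hA / 2 + hB + hD' / 2

/-- The number of lattice points in the `k`-th dilate of the two-dimensional distorted
cross polytope `C_2^c` equals `(c²k² + (c+2)k + 2)/2`. -/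
theorem distortedCross2_ehrhart (c k : ℕ) (hc : 0 < c) :
    ({p : Fin 2 → ℤ | (fun i => (p i : ℝ)) ∈ (k : ℝ) • distortedCross2 c}.ncard : ℚ)
      = ((c : ℚ) ^ 2 * (k : ℚ) ^ 2 + ((c : ℚ) + 2) * k + 2) / 2 := by
  obtain ⟨m, rfl⟩ : ∃ m, c = m + 1 := ⟨c - 1, by omega⟩
  have hlattice : {p : Fin 2 → ℤ | (fun i => (p i : ℝ)) ∈ (k : ℝ) • distortedCross2 (m + 1)} =
      finTwoArrowEquiv ℤ ⁻¹' crossLatticePoints m k := by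
    ext p
    rw [mem_ofPred_eq, distortedCross2, Nat.cast_succ, add_sub_cancel_right,
      mem_smul_convexHull_distortedCross_iff m.cast_nonneg k.cast_nonneg]
    simp only [crossLatticePoints, mem_preimage, finTwoArrowEquiv_apply, mem_ofPred_eq]
    norm_cast
  rw [hlattice, ncard_preimage_of_injective_subset_range (finTwoArrowEquiv ℤ).injective
    (by simp only [Equiv.range_eq_univ, subset_univ]), ncard_crossLatticePoints]
  push_cast
  ring
end

section
/- For a composition η = (η_1, …, η_r) of n and positive integer c, the cardinality of the set of c-coloured multiset permutations S_η^c equals n! times the Euclidean volume of the product of distorted cross polytopes C_{η_1}^c × … × C_{η_r}^c; explicitly, |S_η^c| = c^n · n!/(η_1! ⋯ η_r!) and vol(C_{η_1}^c × … × C_{η_r}^c) = c^n/(η_1! ⋯ η_r!). -/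
/-- The distorted cross polytope
`C_m^c = conv{e_1,…,e_m, -(c-1)e_1, …, -(c-1)e_m} ⊂ ℝ^m`. -/
noncomputable def distortedCross (m c : ℕ) : Set (Fin m → ℝ) :=
  convexHull ℝ ((Set.range fun j : Fin m => Pi.single j (1 : ℝ)) ∪
    (Set.range fun j : Fin m => Pi.single j (-((c : ℝ) - 1))))

/-- The set `S_η^c` of `c`-coloured multiset permutations for the composition `η`:
pairs of a word with `η_j` copies of each letter `j` and a colouring. -/
def colouredMultisetPerms (n r c : ℕ) (η : Fin r → ℕ) :
    Finset ((Fin n → Fin r) × (Fin n → Fin c)) :=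
  Finset.univ.filter (fun p =>
    ∀ j : Fin r, (Finset.univ.filter (fun i : Fin n => p.1 i = j)).card = η j)

/-!
Words with `η_j` copies of each letter `j` form a single orbit of `Perm (Fin n)` acting by
precomposition, and the stabilizer of a word is the product of the permutation groups of its
fibres, so orbit–stabilizer counts `n!/∏ η_j!` words, each with `c^n` colourings.

Up to coordinate hyperplanes, the polytope `conv{e_i, -d e_i}` is the union of `2^m` orthant pieces,
each the image of the corner simplex `{y ≥ 0, ∑ y ≤ 1}` under a diagonal map of determinant
`±∏ (1 or d)`; so its volume is `(1 + d)^m` times that of the simplex. For `d = 1` the polytope is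
the `ℓ¹` unit ball, of known volume `2^m/m!`, which gives the simplex volume `1/m!`. The product
of the polytopes is the image of their cartesian product under currying, which preserves volume.
-/

open MeasureTheory Set

section FiberCount

open Equiv MulAction Fintype

variable {α ι : Type*} [Fintype α] [DecidableEq ι]

theorem DomMulAct.mem_orbit_perm_iff {f g : α → ι} :
    g ∈ orbit (Perm α)ᵈᵐᵃ f ↔ ∀ i, card {a // g a = i} = card {a // f a = i} := by
  constructor
  · rintro ⟨σ, rfl⟩ i
    exact card_congr (subtypeEquiv (mk.symm σ) fun _ => Iff.rfl)
  · intro h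
    let e i : {a // g a = i} ≃ {a // f a = i} := equivOfCardEq (h i)
    let σ : Perm α :=
      (sigmaFiberEquiv g).symm.trans ((sigmaCongrRight e).trans (sigmaFiberEquiv f))
    exact ⟨DomMulAct.mk σ, funext fun a => (e (g a) ⟨a, rfl⟩).2⟩

theorem card_sameFiberCard_mul_prod_factorial [DecidableEq α] [Fintype ι] (f : α → ι) :
    card {g : α → ι // ∀ i, card {a // g a = i} = card {a // f a = i}} *
      ∏ i, (card {a // f a = i}).factorial = (card α).factorial := by
  have h := Nat.card_congr (orbitProdStabilizerEquivGroup (Perm α)ᵈᵐᵃ f)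
  rw [Nat.card_prod, Nat.card_congr (subtypeEquivRight fun _ => DomMulAct.mem_orbit_perm_iff),
    Nat.card_congr (subtypeEquiv (p := (· ∈ stabilizer (Perm α)ᵈᵐᵃ f))
      (q := fun g : Perm α => f ∘ g = f) DomMulAct.mk.symm fun _ => DomMulAct.mem_stabilizer_iff),
    Nat.card_congr DomMulAct.mk.symm, Nat.card_perm] at h
  simpa only [Nat.card_eq_fintype_card, DomMulAct.stabilizer_card] using h

end FiberCount

open Fintype in
theorem card_words_mul_prod_factorial {r : ℕ} (η : Fin r → ℕ) :
    (Finset.univ.filter fun w : Fin (∑ j, η j) → Fin r =>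
        ∀ j, (Finset.univ.filter fun i => w i = j).card = η j).card * ∏ j, (η j).factorial
      = (∑ j, η j).factorial := by
  let f : Fin (∑ j, η j) → Fin r := fun a => (finSigmaFinEquiv.symm a).1
  have hf j : card {a // f a = j} = η j :=
    calc card {a // f a = j} = card {p : Σ j, Fin (η j) // p.1 = j} :=
          card_congr (Equiv.subtypeEquiv finSigmaFinEquiv.symm fun _ => Iff.rfl)
      _ = η j := by rw [card_congr (Equiv.sigmaSubtype j), card_fin]
  simpa only [hf, card_fin, card_subtype, ← Finset.card_subtype] using
    card_sameFiberCard_mul_prod_factorial f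

theorem card_colouredMultisetPerms_mul_prod_factorial {r : ℕ} (c : ℕ) (η : Fin r → ℕ) :
    (colouredMultisetPerms (∑ j, η j) r c η).card * ∏ j, (η j).factorial
      = c ^ (∑ j, η j) * (∑ j, η j).factorial := by
  rw [colouredMultisetPerms, ← Finset.univ_product_univ, Finset.filter_product_left
    (fun w : Fin (∑ j, η j) → Fin r => ∀ j, (Finset.univ.filter fun i => w i = j).card = η j),
    Finset.card_product, mul_right_comm, card_words_mul_prod_factorial]
  simp [mul_comm]

section PiCurry

variable {ι : Type*} [Fintype ι] {κ : ι → Type*} [∀ i, Fintype (κ i)]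
  {X : ∀ i, κ i → Type*} [∀ i j, MeasurableSpace (X i j)]

theorem measurePreserving_piCurry (μ : ∀ i j, Measure (X i j)) [∀ i j, SigmaFinite (μ i j)] :
    MeasurePreserving (MeasurableEquiv.piCurry X)
      (Measure.pi fun p : Σ i, κ i => μ p.1 p.2) (Measure.pi fun i => Measure.pi (μ i)) := by
  refine MeasurePreserving.symm _ ⟨(MeasurableEquiv.piCurry X).symm.measurable, ?_⟩
  refine (Measure.pi_eq fun s hs => ?_).symm
  rw [Measure.map_apply (MeasurableEquiv.piCurry X).symm.measurable (.univ_pi hs)]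
  have : (MeasurableEquiv.piCurry X).symm ⁻¹' Set.univ.pi s =
      Set.univ.pi fun i => Set.univ.pi fun j => s ⟨i, j⟩ := by
    ext x; simp [MeasurableEquiv.coe_piCurry_symm, Sigma.forall, Sigma.uncurry]
  simp_rw [this, Measure.pi_pi, ← Finset.univ_sigma_univ, Finset.prod_sigma]

theorem volume_setOf_forall_curry_mem (A : ∀ i, Set (κ i → ℝ)) (hA : ∀ i, MeasurableSet (A i)) :
    volume {x : (Σ i, κ i) → ℝ | ∀ i, (fun j => x ⟨i, j⟩) ∈ A i} = ∏ i, volume (A i) := by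
  have hset : {x : (Σ i, κ i) → ℝ | ∀ i, (fun j => x ⟨i, j⟩) ∈ A i} =
      MeasurableEquiv.piCurry (fun _ _ => ℝ) ⁻¹' Set.univ.pi A := by
    ext x
    simp only [Set.mem_ofPred_eq, Set.mem_preimage, Set.mem_univ_pi]
    rfl
  simp only [hset, volume_pi, ← Measure.pi_pi]
  exact (measurePreserving_piCurry fun _ _ => volume).measure_preimage
    (MeasurableSet.univ_pi hA).nullMeasurableSet

end PiCurry

section CrossPolytope

variable {ι : Type*} [Fintype ι]

def cornerSimplex (ι : Type*) [Fintype ι] : Set (ι → ℝ) := {y | 0 ≤ y ∧ ∑ i, y i ≤ 1}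

def signScale (d : ℝ) (ε : ι → Bool) : ι → ℝ := fun i => if ε i then 1 else -d

def orthantSimplex (d : ℝ) (ε : ι → Bool) : Set (ι → ℝ) := (signScale d ε * ·) '' cornerSimplex ι

def crossPolytope [DecidableEq ι] (d : ℝ) : Set (ι → ℝ) :=
  convexHull ℝ (range (fun j => Pi.single j 1) ∪ range (fun j => Pi.single j (-d)))

theorem isCompact_cornerSimplex : IsCompact (cornerSimplex ι) := by
  refine (isCompact_Icc (a := 0) (b := 1)).of_isClosed_subset ?_ fun y hy => ⟨hy.1, fun i => ?_⟩
  · exact (isClosed_le continuous_const continuous_id).inter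
      (isClosed_le (continuous_finsetSum _ fun i _ => continuous_apply i) continuous_const)
  · exact (Finset.single_le_sum (fun j _ => hy.1 j) (Finset.mem_univ i)).trans hy.2

theorem isCompact_orthantSimplex (d : ℝ) (ε : ι → Bool) : IsCompact (orthantSimplex d ε) :=
  isCompact_cornerSimplex.image (by fun_prop)

theorem volume_orthantSimplex [DecidableEq ι] (d : ℝ) (ε : ι → Bool) :
    volume (orthantSimplex d ε) =
      ENNReal.ofReal |∏ i, signScale d ε i| * volume (cornerSimplex ι) := by
  have : (signScale d ε * ·) = Matrix.toLin' (Matrix.diagonal (signScale d ε)) :=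
    funext fun y => funext fun i => (Matrix.mulVec_diagonal _ _ i).symm
  rw [orthantSimplex, this, Measure.addHaar_image_linearMap, LinearMap.det_toLin',
    Matrix.det_diagonal]

theorem aedisjoint_orthantSimplex {d : ℝ} (hd : 0 ≤ d) :
    Pairwise (Function.onFun (AEDisjoint volume) (orthantSimplex (ι := ι) d)) := by
  intro ε ε' hne
  obtain ⟨i, hi⟩ := Function.ne_iff.mp hne
  refine measure_mono_null ?_ (Measure.pi_hyperplane (fun _ => volume) i 0)
  rintro _ ⟨⟨y, ⟨hy, -⟩, rfl⟩, ⟨y', ⟨hy', -⟩, h⟩⟩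
  have hyi : 0 ≤ y i := hy i
  have hyi' : 0 ≤ y' i := hy' i
  have h : signScale d ε' i * y' i = signScale d ε i * y i := congrFun h i
  show signScale d ε i * y i = 0
  cases hε : ε i <;> cases hε' : ε' i <;>
    simp only [signScale, hε, hε', ne_eq, not_true_eq_false, Bool.false_eq_true, ↓reduceIte]
      at hi h ⊢ <;> nlinarith

theorem sum_abs_prod_signScale [DecidableEq ι] {d : ℝ} (hd : 0 ≤ d) :
    ∑ ε : ι → Bool, |∏ i, signScale d ε i| = (1 + d) ^ Fintype.card ι := by
  simp_rw [Finset.abs_prod, signScale]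
  rw [← Fintype.prod_sum fun (_ : ι) (b : Bool) => |if b then (1 : ℝ) else -d|]
  simp [abs_of_nonneg hd]

theorem volume_iUnion_orthantSimplex [DecidableEq ι] {d : ℝ} (hd : 0 ≤ d) :
    volume (⋃ ε, orthantSimplex (ι := ι) d ε) =
      ENNReal.ofReal ((1 + d) ^ Fintype.card ι) * volume (cornerSimplex ι) := by
  rw [measure_iUnion₀ (aedisjoint_orthantSimplex hd)
      fun ε => (isCompact_orthantSimplex d ε).isClosed.measurableSet.nullMeasurableSet,
    tsum_fintype]
  simp_rw [volume_orthantSimplex]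
  rw [← Finset.sum_mul, ← ENNReal.ofReal_sum_of_nonneg fun _ _ => abs_nonneg _,
    sum_abs_prod_signScale hd]

theorem setOf_sum_abs_le_one_eq_iUnion_orthantSimplex :
    {x : ι → ℝ | ∑ i, |x i| ≤ 1} = ⋃ ε, orthantSimplex 1 ε := by
  ext x
  simp only [mem_ofPred_eq, mem_iUnion]
  constructor
  · intro hx
    refine ⟨fun i => decide (0 ≤ x i), fun i => |x i|, ⟨fun i => abs_nonneg _, hx⟩,
      funext fun i => ?_⟩
    by_cases h : 0 ≤ x i <;> simp [signScale, h, abs_of_nonneg, abs_of_neg, not_le.mp]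
  · rintro ⟨ε, y, ⟨hy0, hy1⟩, rfl⟩
    refine le_of_eq_of_le (Finset.sum_congr rfl fun i _ => ?_) hy1
    cases h : ε i <;> simp [signScale, h, abs_of_nonneg (hy0 i)]

theorem volume_cornerSimplex [DecidableEq ι] [Nonempty ι] :
    volume (cornerSimplex ι) = ENNReal.ofReal (1 / (Fintype.card ι).factorial) := by
  have h := volume_sum_rpow_le (ι := ι) le_rfl 1
  simp only [Real.rpow_one, div_one, one_add_one_eq_two, Real.Gamma_two, mul_one,
    Real.Gamma_nat_eq_factorial, ENNReal.ofReal_one, one_pow, one_mul,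
    setOf_sum_abs_le_one_eq_iUnion_orthantSimplex, volume_iUnion_orthantSimplex zero_le_one,
    ← mul_one_div (2 ^ _ : ℝ), ENNReal.ofReal_mul (by positivity : (0 : ℝ) ≤ 2 ^ _)] at h
  exact (ENNReal.mul_right_inj (by positivity) ENNReal.ofReal_ne_top).mp h

omit [Fintype ι] in
theorem zero_mem_crossPolytope [DecidableEq ι] [Nonempty ι] {d : ℝ} (hd : 0 ≤ d) :
    (0 : ι → ℝ) ∈ crossPolytope d := by
  obtain ⟨j⟩ := ‹Nonempty ι›
  have hd1 : 0 < 1 + d := by linarith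
  have h1 : Pi.single j 1 ∈ crossPolytope d := subset_convexHull ℝ _ (Or.inl ⟨j, rfl⟩)
  have h2 : Pi.single j (-d) ∈ crossPolytope d := subset_convexHull ℝ _ (Or.inr ⟨j, rfl⟩)
  have hconv : Convex ℝ (crossPolytope (ι := ι) d) := convex_convexHull ℝ _
  convert hconv h1 h2 (div_nonneg hd hd1.le) (div_nonneg zero_le_one hd1.le)
    (by field_simp; ring) using 1
  ext i
  by_cases h : i = j
  · subst h; simp; ring
  · simp [h]

theorem orthantSimplex_subset_crossPolytope [DecidableEq ι] [Nonempty ι] {d : ℝ} (hd : 0 ≤ d)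
    (ε : ι → Bool) : orthantSimplex d ε ⊆ crossPolytope d := by
  rintro _ ⟨y, ⟨hy0, hy1⟩, rfl⟩
  have hy : signScale d ε * y = ∑ o : Option ι,
      o.elim (1 - ∑ i, y i) y • o.elim 0 fun i => Pi.single i (signScale d ε i) := by
    ext k
    simp [Fintype.sum_option, Pi.single_apply, mul_comm]
  change signScale d ε * y ∈ _
  rw [hy]
  refine (convex_convexHull ℝ _).sum_mem (fun o _ => ?_) (by simp [Fintype.sum_option])
    fun o _ => ?_
  · cases o
    · simpa using hy1
    · exact hy0 _
  · cases o with
    | none => exact zero_mem_crossPolytope hd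
    | some i =>
      apply subset_convexHull
      cases h : ε i <;> simp [signScale, h]

theorem crossPolytope_subset_setOf_sub_smul [DecidableEq ι] (d : ℝ) : crossPolytope d ⊆
    {x : ι → ℝ | ∃ u v : ι → ℝ, 0 ≤ u ∧ 0 ≤ v ∧ ∑ i, (u i + v i) ≤ 1 ∧ x = u - d • v} := by
  refine convexHull_min ?_ ?_
  · rintro _ (⟨j, rfl⟩ | ⟨j, rfl⟩)
    · exact ⟨Pi.single j 1, 0, by simp [Pi.single_nonneg], le_rfl, by simp, by simp⟩
    · refine ⟨0, Pi.single j 1, le_rfl, by simp [Pi.single_nonneg], by simp, ?_⟩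
      ext i
      by_cases h : i = j <;> simp [h]
  · rintro _ ⟨u, v, hu, hv, huv, rfl⟩ _ ⟨u', v', hu', hv', huv', rfl⟩ a b ha hb hab
    refine ⟨a • u + b • u', a • v + b • v', by positivity, by positivity, ?_, by module⟩
    calc ∑ i, ((a • u + b • u') i + (a • v + b • v') i)
        = a * ∑ i, (u i + v i) + b * ∑ i, (u' i + v' i) := by
          simp only [Finset.mul_sum, ← Finset.sum_add_distrib]; congr 1; ext; simp; ring
      _ ≤ a * 1 + b * 1 := by gcongr
      _ = 1 := by rw [mul_one, mul_one, hab]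

theorem sub_smul_mem_iUnion_orthantSimplex {d : ℝ} (hd : 0 ≤ d) {u v : ι → ℝ} (hu : 0 ≤ u)
    (hv : 0 ≤ v) (huv : ∑ i, (u i + v i) ≤ 1) : u - d • v ∈ ⋃ ε, orthantSimplex d ε := by
  set x := u - d • v
  have hxi i : x i = u i - d * v i := rfl
  have hd_pos i (h : ¬0 ≤ x i) : 0 < d := by
    have : 0 ≤ u i := hu i
    have : 0 ≤ v i := hv i
    rw [hxi] at h; contrapose! h; nlinarith
  refine mem_iUnion.mpr ⟨fun i => decide (0 ≤ x i), fun i => if 0 ≤ x i then x i else -x i / d,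
    ⟨fun i => ?_, (Finset.sum_le_sum fun i _ => ?_).trans huv⟩, funext fun i => ?_⟩
  · dsimp only
    split_ifs with h
    · exact h
    · exact div_nonneg (by linarith) (hd_pos i h).le
  · have : 0 ≤ u i := hu i
    have : 0 ≤ v i := hv i
    split_ifs with h
    · nlinarith [hxi i]
    · rw [div_le_iff₀ (hd_pos i h)]; nlinarith [hxi i]
  · by_cases h : 0 ≤ x i
    · simp [signScale, h]
    · simp only [Pi.mul_apply, signScale, h, decide_false, Bool.false_eq_true, ↓reduceIte]
      field_simp [(hd_pos i h).ne']

theorem crossPolytope_eq_iUnion_orthantSimplex [DecidableEq ι] [Nonempty ι] {d : ℝ}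
    (hd : 0 ≤ d) : crossPolytope d = ⋃ ε, orthantSimplex (ι := ι) d ε := by
  refine ((crossPolytope_subset_setOf_sub_smul d).trans ?_).antisymm
    (iUnion_subset (orthantSimplex_subset_crossPolytope hd))
  rintro _ ⟨u, v, hu, hv, huv, rfl⟩
  exact sub_smul_mem_iUnion_orthantSimplex hd hu hv huv

omit [Fintype ι] in
theorem isCompact_crossPolytope [DecidableEq ι] [Finite ι] (d : ℝ) :
    IsCompact (crossPolytope (ι := ι) d) :=
  ((finite_range _).union (finite_range _)).isCompact_convexHull (𝕜 := ℝ)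

theorem volume_crossPolytope [DecidableEq ι] [Nonempty ι] {d : ℝ} (hd : 0 ≤ d) :
    volume (crossPolytope (ι := ι) d) =
      ENNReal.ofReal ((1 + d) ^ Fintype.card ι / (Fintype.card ι).factorial) := by
  rw [crossPolytope_eq_iUnion_orthantSimplex hd, volume_iUnion_orthantSimplex hd,
    volume_cornerSimplex, ← ENNReal.ofReal_mul (by positivity), mul_one_div]

end CrossPolytope

theorem volume_distortedCross {m c : ℕ} (hm : 0 < m) (hc : 0 < c) :
    volume (distortedCross m c) = ENNReal.ofReal ((c : ℝ) ^ m / m.factorial) := by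
  have : Nonempty (Fin m) := ⟨⟨0, hm⟩⟩
  have hd : (0 : ℝ) ≤ c - 1 := sub_nonneg.mpr (Nat.one_le_cast.mpr hc)
  have h := volume_crossPolytope (ι := Fin m) hd
  rwa [Fintype.card_fin, add_sub_cancel] at h

theorem coloured_card_eq_volume_general (r c : ℕ) (hc : 0 < c)
    (η : Fin r → ℕ) (hη : ∀ i, 0 < η i) (n : ℕ) (hn : n = ∑ i, η i) :
    (((colouredMultisetPerms n r c η).card : ℝ)
        = (Nat.factorial n : ℝ) * (MeasureTheory.volume
            {x : ((i : Fin r) × Fin (η i)) → ℝ |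
              ∀ i : Fin r, (fun j => x ⟨i, j⟩) ∈ distortedCross (η i) c}).toReal) ∧
    (((colouredMultisetPerms n r c η).card : ℚ)
        = (c : ℚ) ^ n * (Nat.factorial n : ℚ) / ∏ i, (Nat.factorial (η i) : ℚ)) ∧
    (MeasureTheory.volume
        {x : ((i : Fin r) × Fin (η i)) → ℝ |
          ∀ i : Fin r, (fun j => x ⟨i, j⟩) ∈ distortedCross (η i) c}
      = ENNReal.ofReal ((c : ℝ) ^ n / ∏ i, (Nat.factorial (η i) : ℝ))) := by
  subst hn
  have hcard := card_colouredMultisetPerms_mul_prod_factorial c η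
  have hvol : volume {x : ((i : Fin r) × Fin (η i)) → ℝ |
      ∀ i : Fin r, (fun j => x ⟨i, j⟩) ∈ distortedCross (η i) c} =
        ENNReal.ofReal ((c : ℝ) ^ (∑ i, η i) / ∏ i, ((η i).factorial : ℝ)) := by
    rw [volume_setOf_forall_curry_mem (fun i => distortedCross (η i) c)
      fun i => (isCompact_crossPolytope (ι := Fin (η i)) _).isClosed.measurableSet]
    simp_rw [volume_distortedCross (hη _) hc]
    rw [← ENNReal.ofReal_prod_of_nonneg fun _ _ => by positivity, Finset.prod_div_distrib,
      Finset.prod_pow_eq_pow_sum]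
  refine ⟨?_, ?_, hvol⟩
  · rw [hvol, ENNReal.toReal_ofReal (by positivity), mul_div_assoc', eq_div_iff (by positivity),
      mul_comm _ ((c : ℝ) ^ _)]
    exact_mod_cast hcard
  · rw [eq_div_iff (by positivity)]
    exact_mod_cast hcard

/-- `|S_η^c| = n! · vol(C_{η_1}^c × … × C_{η_r}^c)`; explicitly
`|S_η^c| = c^n · n!/(η_1! ⋯ η_r!)` and `vol(C_{η_1}^c × … × C_{η_r}^c) = c^n/(η_1! ⋯ η_r!)`. -/
theorem coloured_card_eq_volume (r c : ℕ) (hr : 0 < r) (hc : 0 < c)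
    (η : Fin r → ℕ) (hη : ∀ i, 0 < η i) (n : ℕ) (hn : n = ∑ i, η i) :
    (((colouredMultisetPerms n r c η).card : ℝ)
        = (Nat.factorial n : ℝ) * (MeasureTheory.volume
            {x : ((i : Fin r) × Fin (η i)) → ℝ |
              ∀ i : Fin r, (fun j => x ⟨i, j⟩) ∈ distortedCross (η i) c}).toReal) ∧
    (((colouredMultisetPerms n r c η).card : ℚ)
        = (c : ℚ) ^ n * (Nat.factorial n : ℚ) / ∏ i, (Nat.factorial (η i) : ℚ)) ∧
    (MeasureTheory.volume
        {x : ((i : Fin r) × Fin (η i)) → ℝ |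
          ∀ i : Fin r, (fun j => x ⟨i, j⟩) ∈ distortedCross (η i) c}
      = ENNReal.ofReal ((c : ℝ) ^ n / ∏ i, (Nat.factorial (η i) : ℝ))) :=
  coloured_card_eq_volume_general r c hc η hη n hn
end

section
/- The product of standard simplices Δ_{η_1} × … × Δ_{η_r} is Gorenstein if and only if all parts of the composition are equal, i.e., η_1 = … = η_r; in this case the Gorenstein index is η_1 + 1. -/
open Pointwise

/-- A full-dimensional lattice polytope `Q ⊆ ℝ^ι` is reflexive if, after translation by
a lattice vector, it equals `{x : Ax ≤ 1}` for some integer matrix `A`, with `0` in the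
interior of the translated polytope. -/
def IsReflexive {ι : Type} [Fintype ι] (Q : Set (ι → ℝ)) : Prop :=
  ∃ (v : ι → ℤ) (m : ℕ) (A : Matrix (Fin m) ι ℤ),
    ((fun x : ι → ℝ => x - fun j => ((v j : ℝ))) '' Q
        = {x : ι → ℝ | ∀ i, ∑ j, (A i j : ℝ) * x j ≤ 1}) ∧
    (0 : ι → ℝ) ∈ interior ((fun x : ι → ℝ => x - fun j => ((v j : ℝ))) '' Q)

/-- `Q` is Gorenstein of index `l` if `l ≥ 1` and the `l`-th dilate `lQ` is reflexive. -/
def IsGorenstein {ι : Type} [Fintype ι] (Q : Set (ι → ℝ)) (l : ℕ) : Prop :=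
  0 < l ∧ IsReflexive ((l : ℝ) • Q)

/-!
Write the product of simplices as `{x | x ≥ 0, ∑ⱼ x_{ij} ≤ 1 for every block i}`. Its `l`-th
dilate translated by `-v` is `{x | x_k ≥ -v_k, ∑ⱼ x_{ij} ≤ l - ∑ⱼ v_{ij}}`. If this equals
`{x | Ax ≤ 1}` with `0` in its interior, every `v_k` and every `l - ∑ⱼ v_{ij}` is positive, and
the points `-v_k e_k` and `(l - ∑ⱼ v_{ij}) e_{ij}` lie on the boundary. So some integral row of
`A` is tight at each of them, which makes `v_k` and `l - ∑ⱼ v_{ij}` divide `1`. Hence `v = 1`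
and `l = η_i + 1` for every `i`. Conversely, for equal parts, `v = 1` and `l = η + 1` give
`{x | x ≥ -1, block sums ≤ 1}`, which has `0` in its interior.
-/

theorem exists_eq_of_notMem_interior {σ E : Type*} [Finite σ] [TopologicalSpace E]
    {f : σ → E → ℝ} (hf : ∀ s, Continuous (f s)) {c : ℝ} {p : E}
    (hp : p ∈ {x | ∀ s, f s x ≤ c}) (hint : p ∉ interior {x | ∀ s, f s x ≤ c}) :
    ∃ s, f s p = c := by
  by_contra! hne
  have hopen : IsOpen {x | ∀ s, f s x < c} := by
    rw [Set.ofPred_forall]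
    exact isOpen_iInter_of_finite fun s => isOpen_lt (hf s) continuous_const
  exact hint <| interior_maximal (fun x hx s => (hx s).le) hopen
    fun s => (hp s).lt_of_ne (hne s)

theorem notMem_interior_of_forall_add_smul_notMem {E : Type*} [TopologicalSpace E]
    [AddCommGroup E] [Module ℝ E] [ContinuousAdd E] [ContinuousSMul ℝ E] {S : Set E} {p d : E}
    (h : ∀ s : ℝ, 0 < s → p + s • d ∉ S) : p ∉ interior S := by
  intro hp
  have hray : Filter.Tendsto (fun s : ℝ => p + s • d) (nhdsWithin 0 (Set.Ioi 0)) (nhds p) := by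
    have : Continuous fun s : ℝ => p + s • d := by fun_prop
    simpa using (this.tendsto 0).mono_left nhdsWithin_le_nhds
  obtain ⟨s, hsS, hs⟩ :=
    ((hray.eventually (mem_interior_iff_mem_nhds.mp hp)).and self_mem_nhdsWithin).exists
  exact h s hs hsS

theorem isUnit_of_single_mem_of_notMem_interior {σ ι : Type*} [Finite σ] [Fintype ι]
    [DecidableEq ι] {A : Matrix σ ι ℤ} {k : ι} {c : ℤ}
    (hmem : Pi.single k (c : ℝ) ∈ {x : ι → ℝ | ∀ s, ∑ j, (A s j : ℝ) * x j ≤ 1})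
    (hint : Pi.single k (c : ℝ) ∉ interior {x : ι → ℝ | ∀ s, ∑ j, (A s j : ℝ) * x j ≤ 1}) :
    IsUnit c := by
  obtain ⟨s, hs⟩ := exists_eq_of_notMem_interior (fun s => by fun_prop) hmem hint
  simp only [Pi.single_apply, mul_ite, mul_zero, Finset.sum_ite_eq', Finset.mem_univ,
    if_true] at hs
  exact IsUnit.of_mul_eq_one_right (A s k) (by exact_mod_cast hs)

theorem exists_fin_rows_eq {σ ι : Type*} [Finite σ] [Fintype ι] (B : Matrix σ ι ℤ) :
    ∃ (m : ℕ) (A : Matrix (Fin m) ι ℤ),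
      {x : ι → ℝ | ∀ s, ∑ j, (B s j : ℝ) * x j ≤ 1}
        = {x : ι → ℝ | ∀ s, ∑ j, (A s j : ℝ) * x j ≤ 1} := by
  obtain ⟨m, ⟨e⟩⟩ := Finite.exists_equiv_fin σ
  exact ⟨m, B.submatrix e.symm id, Set.ext fun x => e.symm.forall_congr_right.symm⟩

section BlockPolytope

variable {κ : Type} {α : κ → Type} [∀ i, Fintype (α i)]

def blockPolytope (a : (Σ i, α i) → ℝ) (b : κ → ℝ) : Set ((Σ i, α i) → ℝ) :=
  {x | ∀ i, (∀ j, a ⟨i, j⟩ ≤ x ⟨i, j⟩) ∧ ∑ j, x ⟨i, j⟩ ≤ b i}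

theorem smul_blockPolytope {t : ℝ} (ht : 0 < t) (a : (Σ i, α i) → ℝ) (b : κ → ℝ) :
    t • blockPolytope a b = blockPolytope (t • a) (t • b) := by
  ext x
  rw [Set.mem_smul_set_iff_inv_smul_mem₀ ht.ne']
  simp only [blockPolytope, Set.mem_ofPred_eq, Pi.smul_apply, smul_eq_mul, ← Finset.mul_sum,
    inv_mul_le_iff₀ ht, le_inv_mul_iff₀ ht]

theorem image_sub_blockPolytope (w : (Σ i, α i) → ℝ) (a : (Σ i, α i) → ℝ) (b : κ → ℝ) :
    (fun x => x - w) '' blockPolytope a b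
      = blockPolytope (a - w) (fun i => b i - ∑ j, w ⟨i, j⟩) := by
  ext x
  rw [Set.image_eq_preimage_of_inverse (g := (· + w)) (fun x => sub_add_cancel x w)
    (fun x => add_sub_cancel_right x w)]
  simp only [blockPolytope, Set.mem_preimage, Set.mem_ofPred_eq, Pi.add_apply, Pi.sub_apply,
    Finset.sum_add_distrib, sub_le_iff_le_add, le_sub_iff_add_le]

theorem sum_single_block [DecidableEq κ] [∀ i, DecidableEq (α i)] (k : Σ i, α i) (c : ℝ)
    (i : κ) : ∑ j, (Pi.single k c : (Σ i, α i) → ℝ) ⟨i, j⟩ = if k.1 = i then c else 0 := by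
  obtain ⟨i₀, j₀⟩ := k
  by_cases h : i₀ = i
  · subst h
    simp [Pi.single_apply]
  · simp [h, Ne.symm h]

theorem single_mem_blockPolytope_iff [DecidableEq κ] [∀ i, DecidableEq (α i)]
    {a : (Σ i, α i) → ℝ} {b : κ → ℝ} (ha : ∀ k, a k ≤ 0) (hb : ∀ i, 0 ≤ b i)
    (k : Σ i, α i) (c : ℝ) : Pi.single k c ∈ blockPolytope a b ↔ a k ≤ c ∧ c ≤ b k.1 := by
  simp only [blockPolytope, Set.mem_ofPred_eq, sum_single_block]
  constructor
  · intro h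
    exact ⟨by simpa using (h k.1).1 k.2, by simpa using (h k.1).2⟩
  · rintro ⟨hak, hcb⟩ i
    refine ⟨fun j => ?_, ?_⟩
    · by_cases hj : (⟨i, j⟩ : Σ i, α i) = k
      · rw [hj, Pi.single_eq_same]; exact hak
      · rw [Pi.single_eq_of_ne hj]; exact ha _
    · split_ifs with hi
      · exact hi ▸ hcb
      · exact hb i

theorem bounds_of_zero_mem_interior_blockPolytope [∀ i, Nonempty (α i)]
    {a : (Σ i, α i) → ℝ} {b : κ → ℝ} (h : 0 ∈ interior (blockPolytope a b)) :
    (∀ k, a k < 0) ∧ ∀ i, 0 < b i := by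
  classical
  constructor
  · intro k
    by_contra! hk
    refine notMem_interior_of_forall_add_smul_notMem (d := -Pi.single k 1) (fun s hs hmem => ?_) h
    have := (hmem k.1).1 k.2
    simp only [zero_add, Pi.smul_apply, Pi.neg_apply, Pi.single_eq_same, smul_eq_mul] at this
    linarith
  · intro i
    by_contra! hi
    have j := Classical.arbitrary (α i)
    refine notMem_interior_of_forall_add_smul_notMem (d := Pi.single ⟨i, j⟩ 1)
      (fun s hs hmem => ?_) h
    have := (hmem i).2
    simp only [zero_add, Pi.smul_apply, smul_eq_mul, ← Finset.mul_sum, sum_single_block,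
      if_true, mul_one] at this
    linarith

variable [Fintype κ]

theorem zero_mem_interior_blockPolytope {a : (Σ i, α i) → ℝ} {b : κ → ℝ} (ha : ∀ k, a k < 0)
    (hb : ∀ i, 0 < b i) : 0 ∈ interior (blockPolytope a b) := by
  have hopen : IsOpen
      {x : (Σ i, α i) → ℝ | ∀ i, (∀ j, a ⟨i, j⟩ < x ⟨i, j⟩) ∧ ∑ j, x ⟨i, j⟩ < b i} := by
    simp only [Set.ofPred_forall, Set.ofPred_and]
    refine isOpen_iInter_of_finite fun i => (isOpen_iInter_of_finite fun j => ?_).inter ?_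
    · exact isOpen_lt continuous_const (continuous_apply _)
    · exact isOpen_lt (by fun_prop) continuous_const
  refine interior_maximal (fun x hx i => ⟨fun j => ((hx i).1 j).le, (hx i).2.le⟩) hopen ?_
  intro i
  simpa using ⟨fun j => ha ⟨i, j⟩, hb i⟩

theorem eq_neg_one_and_eq_one_of_blockPolytope_eq [∀ i, Nonempty (α i)] {σ : Type*} [Finite σ]
    {a : (Σ i, α i) → ℤ} {b : κ → ℤ} {A : Matrix σ (Σ i, α i) ℤ}
    (hA : blockPolytope (fun k => (a k : ℝ)) (fun i => (b i : ℝ))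
      = {x | ∀ s, ∑ j, (A s j : ℝ) * x j ≤ 1})
    (h0 : 0 ∈ interior (blockPolytope (fun k => (a k : ℝ)) (fun i => (b i : ℝ)))) :
    (∀ k, a k = -1) ∧ ∀ i, b i = 1 := by
  classical
  obtain ⟨ha, hb⟩ := bounds_of_zero_mem_interior_blockPolytope h0
  have hmem := single_mem_blockPolytope_iff (fun k => (ha k).le) (fun i => (hb i).le)
  have isUnit_of_tight : ∀ k (c : ℤ) (d : ℝ), (a k : ℝ) ≤ c → (c : ℝ) ≤ b k.1 →
      (∀ s : ℝ, 0 < s → ¬((a k : ℝ) ≤ c + s * d ∧ c + s * d ≤ b k.1)) → IsUnit c := by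
    intro k c d hlo hhi hout
    have hc := (hmem k c).2 ⟨hlo, hhi⟩
    have hnot : Pi.single k (c : ℝ) ∉ interior (blockPolytope (fun k => (a k : ℝ)) (b ·)) :=
      notMem_interior_of_forall_add_smul_notMem (d := Pi.single k d) fun s hs => by
        rw [← Pi.single_smul', ← Pi.single_add, hmem]
        exact hout s hs
    rw [hA] at hc hnot
    exact isUnit_of_single_mem_of_notMem_interior hc hnot
  constructor
  · intro k
    have hunit := isUnit_of_tight k (a k) (-1) le_rfl (ha k |>.trans (hb k.1)).le
      (fun s hs h => by linarith [h.1])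
    have : a k < 0 := by exact_mod_cast ha k
    rcases Int.isUnit_iff.mp hunit with h | h <;> omega
  · intro i
    have j := Classical.arbitrary (α i)
    have hunit := isUnit_of_tight ⟨i, j⟩ (b i) 1 (ha _ |>.trans (hb i)).le le_rfl
      (fun s hs h => by linarith [h.2])
    have : 0 < b i := by exact_mod_cast hb i
    rcases Int.isUnit_iff.mp hunit with h | h <;> omega

theorem exists_matrix_blockPolytope_neg_one_one :
    ∃ (m : ℕ) (A : Matrix (Fin m) (Σ i, α i) ℤ),
      blockPolytope (fun _ => -1) (fun _ => 1) = {x | ∀ s, ∑ j, (A s j : ℝ) * x j ≤ 1} := by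
  classical
  obtain ⟨m, A, hA⟩ := exists_fin_rows_eq (Matrix.of <| Sum.elim (fun k => -Pi.single k 1)
    fun i (k : Σ i, α i) => if k.1 = i then (1 : ℤ) else 0)
  refine ⟨m, A, Eq.trans ?_ hA⟩
  ext x
  have hrow_single (k : Σ i, α i) :
      ∑ j, (((-Pi.single k 1 : (Σ i, α i) → ℤ) j : ℤ) : ℝ) * x j = -x k := by
    simp [Pi.single_apply]
  have hrow_block (i : κ) :
      ∑ j : Σ i, α i, ((if j.1 = i then 1 else 0 : ℤ) : ℝ) * x j = ∑ j, x ⟨i, j⟩ := by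
    rw [Fintype.sum_sigma, Finset.sum_eq_single i] <;> simp_all
  simp only [blockPolytope, Set.mem_ofPred_eq, Sum.forall, Matrix.of_apply, Sum.elim_inl,
    Sum.elim_inr, hrow_single, hrow_block, Sigma.forall, forall_and, neg_le]

theorem card_add_one_eq_of_isGorenstein [∀ i, Nonempty (α i)] {l : ℕ}
    (h : IsGorenstein (blockPolytope (0 : (Σ i, α i) → ℝ) 1) l) (i : κ) :
    Fintype.card (α i) + 1 = l := by
  obtain ⟨hl, v, m, A, hA, h0⟩ := h
  have hP : (fun x => x - fun k => (v k : ℝ)) '' ((l : ℝ) • blockPolytope 0 1)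
      = blockPolytope (fun k => ((-v k : ℤ) : ℝ)) (fun i => ((l - ∑ j, v ⟨i, j⟩ : ℤ) : ℝ)) := by
    rw [smul_blockPolytope (by positivity), image_sub_blockPolytope]
    congr 1 <;> ext <;> simp
  rw [hP] at hA h0
  obtain ⟨hv, hb⟩ := eq_neg_one_and_eq_one_of_blockPolytope_eq hA h0
  have hsum : ∑ j, v ⟨i, j⟩ = Fintype.card (α i) := by simp [fun k => neg_inj.mp (hv k)]
  have := hb i
  omega

theorem isGorenstein_blockPolytope_zero_one {n : ℕ} (hcard : ∀ i, Fintype.card (α i) = n) :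
    IsGorenstein (blockPolytope (0 : (Σ i, α i) → ℝ) 1) (n + 1) := by
  refine ⟨n.succ_pos, fun _ => 1, ?_⟩
  have hP : (fun x => x - fun _ => ((1 : ℤ) : ℝ)) ''
      (((n + 1 : ℕ) : ℝ) • blockPolytope (0 : (Σ i, α i) → ℝ) 1)
        = blockPolytope (fun _ => -1) (fun _ => 1) := by
    rw [smul_blockPolytope (by positivity), image_sub_blockPolytope]
    congr 1 <;> ext <;> simp [hcard]
  obtain ⟨m, A, hA⟩ := exists_matrix_blockPolytope_neg_one_one (α := α)
  rw [hP]
  exact ⟨m, A, hA, zero_mem_interior_blockPolytope (fun _ => by norm_num) fun _ => by norm_num⟩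

end BlockPolytope

/-- The product of standard simplices `Δ_{η_1} × … × Δ_{η_r}` (where
`Δ_m = {x ∈ ℝ^m : x_j ≥ 0, ∑ x_j ≤ 1} = conv{0, e_1, …, e_m}`) is Gorenstein if and
only if all parts of the composition are equal; in that case the Gorenstein index is
`η_1 + 1`. -/
theorem product_simplices_gorenstein (r : ℕ) (hr : 0 < r) (η : Fin r → ℕ)
    (hη : ∀ i, 0 < η i) :
    ((∃ l : ℕ, IsGorenstein {x : ((i : Fin r) × Fin (η i)) → ℝ |
          ∀ i : Fin r, (∀ j, 0 ≤ x ⟨i, j⟩) ∧ ∑ j, x ⟨i, j⟩ ≤ 1} l)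
        ↔ ∀ i j : Fin r, η i = η j) ∧
    ((∀ i j : Fin r, η i = η j) →
      IsGorenstein {x : ((i : Fin r) × Fin (η i)) → ℝ |
          ∀ i : Fin r, (∀ j, 0 ≤ x ⟨i, j⟩) ∧ ∑ j, x ⟨i, j⟩ ≤ 1} (η ⟨0, hr⟩ + 1)) := by
  have : ∀ i, Nonempty (Fin (η i)) := fun i => Fin.pos_iff_nonempty.mp (hη i)
  have of_eq (heq : ∀ i j, η i = η j) :
      IsGorenstein (blockPolytope (0 : (Σ i, Fin (η i)) → ℝ) 1) (η ⟨0, hr⟩ + 1) :=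
    isGorenstein_blockPolytope_zero_one (α := (Fin <| η ·)) fun i => by simp [heq i ⟨0, hr⟩]
  refine ⟨⟨fun ⟨l, hl⟩ i j => ?_, fun heq => ⟨_, of_eq heq⟩⟩, of_eq⟩
  have hcard := card_add_one_eq_of_isGorenstein hl
  simpa using (hcard i).trans (hcard j).symm
end
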